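/- arXiv:1503.00511 — 3 statements merged into one kernel-verified Lean document; each statement's English description precedes it below -/
import Mathlib

section
/- Let n be a positive integer and g a nonnegative integer with gcd(n,g)=1. Then the spectral norm of the g-circulant matrix C_{n,g}(L) with first row (L_1,L_2,…,L_n) equals L_{n+2} − 3. -/
/-- The `g`-circulant matrix of size `n` with first row `(a 0, a 1, …, a (n-1))`:
its `(i,j)` entry (0-indexed) equals `a ((j - i*g) mod n)`. -/
def gCirc {α : Type*} (n g : ℕ) (a : ℕ → α) : Matrix (Fin n) (Fin n) α :=
  Matrix.of fun i j => a ((j.val + (n - (i.val * g) % n)) % n)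

/-- The spectral norm (operator 2-norm) of a real square matrix. -/
noncomputable def matSpectralNorm {n : ℕ} (A : Matrix (Fin n) (Fin n) ℝ) : ℝ :=
  ‖Matrix.toEuclideanCLM (𝕜 := ℝ) A‖

/-!
Every row of a `g`-circulant matrix is a permutation of its first row, and when `gcd(n, g) = 1`
so is every column. Hence all row and column sums of `C_{n,g}(L)` equal
`L_1 + ⋯ + L_n = L_{n+2} - 3`. For a nonnegative matrix whose row and column sums all equal `s`,
the constant vector is an eigenvector with eigenvalue `s`, while Cauchy–Schwarz row by row
(the Schur test) gives `‖A x‖ ≤ s ‖x‖`; so the spectral norm is exactly `s`.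
-/

open Finset

theorem gCirc_apply {α : Type*} {n : ℕ} [NeZero n] (g : ℕ) (a : ℕ → α) (i j : Fin n) :
    gCirc n g a i j = a (j - Fin.ofNat n (i * g)).val := by
  simp [gCirc, Fin.sub_def, add_comm]

theorem Fin.bijective_ofNat_mul {n g : ℕ} [NeZero n] (hg : n.Coprime g) :
    Function.Bijective fun i : Fin n => Fin.ofNat n (i * g) := by
  refine Finite.injective_iff_bijective.mp fun i i' h => Fin.ext ?_
  have hmod : i * g ≡ i' * g [MOD n] := Fin.val_eq_of_eq h
  exact (Nat.ModEq.cancel_right_of_coprime hg hmod).eq_of_lt_of_lt i.isLt i'.isLt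

theorem sum_gCirc_row {α : Type*} [AddCommMonoid α] {n : ℕ} (g : ℕ) (a : ℕ → α) (i : Fin n) :
    ∑ j, gCirc n g a i j = ∑ k ∈ range n, a k := by
  obtain _ | n := n
  · simp
  simp_rw [gCirc_apply]
  exact (Fintype.sum_bijective _ (Equiv.subRight _).bijective _ (fun c : Fin (n + 1) => a c)
    fun _ => rfl).trans (Fin.sum_univ_eq_sum_range a _)

theorem sum_gCirc_col {α : Type*} [AddCommMonoid α] {n g : ℕ} (hg : n.Coprime g) (a : ℕ → α)
    (j : Fin n) : ∑ i, gCirc n g a i j = ∑ k ∈ range n, a k := by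
  obtain _ | n := n
  · simp
  simp_rw [gCirc_apply]
  exact (Fintype.sum_bijective _ ((Equiv.subLeft j).bijective.comp (Fin.bijective_ofNat_mul hg))
    _ (fun c : Fin (n + 1) => a c) fun _ => rfl).trans (Fin.sum_univ_eq_sum_range a _)

theorem sum_range_eq_sub_of_fib_rec {R : Type*} [AddCommGroup R] {L : ℕ → R}
    (hrec : ∀ m, L (m + 2) = L (m + 1) + L m) (n : ℕ) :
    ∑ k ∈ range n, L (k + 1) = L (n + 2) - L 2 := by
  rw [← sum_range_sub (fun k => L (k + 2))]
  refine sum_congr rfl fun k _ => ?_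
  rw [hrec (k + 1)]
  abel

theorem nonneg_of_fib_rec {R : Type*} [AddCommMonoid R] [PartialOrder R] [IsOrderedAddMonoid R]
    {L : ℕ → R} (h0 : 0 ≤ L 0) (h1 : 0 ≤ L 1) (hrec : ∀ m, L (m + 2) = L (m + 1) + L m) (m : ℕ) :
    0 ≤ L m := by
  induction m using Nat.twoStepInduction with
  | zero => exact h0
  | one => exact h1
  | more m ih ih' => rw [hrec]; exact add_nonneg ih' ih

namespace Matrix

variable {ι : Type*} [Fintype ι] [DecidableEq ι] {A : Matrix ι ι ℝ} {s : ℝ}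

theorem abs_le_norm_toEuclideanCLM_of_sum_row_eq [Nonempty ι] (hrow : ∀ i, ∑ j, A i j = s) :
    |s| ≤ ‖toEuclideanCLM (𝕜 := ℝ) A‖ := by
  set v : EuclideanSpace ℝ ι := WithLp.toLp 2 fun _ => 1
  have hv : toEuclideanCLM (𝕜 := ℝ) A v = s • v := by
    ext i
    simp [v, mulVec, dotProduct, hrow]
  have hv0 : 0 < ‖v‖ := norm_pos_iff.mpr fun h => by
    simpa [v] using congrArg (fun w : EuclideanSpace ℝ ι => w (Classical.arbitrary ι)) h
  refine le_of_mul_le_mul_right ?_ hv0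
  calc |s| * ‖v‖ = ‖toEuclideanCLM (𝕜 := ℝ) A v‖ := by rw [hv, norm_smul, Real.norm_eq_abs]
    _ ≤ ‖toEuclideanCLM (𝕜 := ℝ) A‖ * ‖v‖ := ContinuousLinearMap.le_opNorm _ _

theorem norm_toEuclideanCLM_le_of_sum_le (hA : ∀ i j, 0 ≤ A i j) (hs : 0 ≤ s)
    (hrow : ∀ i, ∑ j, A i j ≤ s) (hcol : ∀ j, ∑ i, A i j ≤ s) :
    ‖toEuclideanCLM (𝕜 := ℝ) A‖ ≤ s := by
  refine ContinuousLinearMap.opNorm_le_bound _ hs fun x => ?_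
  refine (sq_le_sq₀ (norm_nonneg _) (by positivity)).mp ?_
  simp only [EuclideanSpace.norm_sq_eq, ofLp_toEuclideanCLM, Real.norm_eq_abs, sq_abs, mul_pow,
    mulVec, dotProduct, mul_sum]
  have hAx : ∀ i j, 0 ≤ A i j * x j ^ 2 := fun i j => mul_nonneg (hA i j) (sq_nonneg _)
  calc ∑ i, (∑ j, A i j * x j) ^ 2 ≤ ∑ i, (∑ j, A i j) * ∑ j, A i j * x j ^ 2 := by
        gcongr with i
        exact sum_sq_le_sum_mul_sum_of_sq_le_mul _ (fun j _ => hA i j) (fun j _ => hAx i j)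
          fun j _ => le_of_eq (by ring)
    _ ≤ ∑ i, s * ∑ j, A i j * x j ^ 2 := by
        gcongr with i
        exacts [sum_nonneg fun j _ => hAx i j, hrow i]
    _ = s * ∑ j, (∑ i, A i j) * x j ^ 2 := by rw [← mul_sum, sum_comm]; simp_rw [sum_mul]
    _ ≤ s * ∑ j, s * x j ^ 2 := by gcongr with j; exact hcol j
    _ = ∑ j, s ^ 2 * x j ^ 2 := by rw [mul_sum]; ring_nf

theorem norm_toEuclideanCLM_eq_of_sum_eq [Nonempty ι] (hA : ∀ i j, 0 ≤ A i j)
    (hrow : ∀ i, ∑ j, A i j = s) (hcol : ∀ j, ∑ i, A i j = s) :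
    ‖toEuclideanCLM (𝕜 := ℝ) A‖ = s := by
  have hs : 0 ≤ s := hrow (Classical.arbitrary ι) ▸ sum_nonneg fun j _ => hA _ j
  refine le_antisymm (norm_toEuclideanCLM_le_of_sum_le hA hs (fun i => (hrow i).le)
    fun j => (hcol j).le) ?_
  simpa [abs_of_nonneg hs] using abs_le_norm_toEuclideanCLM_of_sum_row_eq hrow

end Matrix

/-- Spectral norm of the g-circulant matrix of Lucas numbers. -/
theorem spectralNorm_gCirc_lucas
    (L : ℕ → ℝ) (hL0 : L 0 = 2) (hL1 : L 1 = 1)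
    (hrec : ∀ m : ℕ, L (m + 2) = L (m + 1) + L m)
    (n r : ℕ) (hn : 0 < n) (hgcd : Nat.gcd n r = 1) :
    matSpectralNorm (gCirc n r (fun m => L (m + 1))) = L (n + 2) - 3 := by
  have : Nonempty (Fin n) := ⟨⟨0, hn⟩⟩
  have hL : ∀ m, 0 ≤ L m := nonneg_of_fib_rec (by rw [hL0]; norm_num) (by rw [hL1]; norm_num) hrec
  have hA : ∀ i j, 0 ≤ gCirc n r (fun m => L (m + 1)) i j := fun _ _ => hL _
  rw [matSpectralNorm,
    Matrix.norm_toEuclideanCLM_eq_of_sum_eq hA (sum_gCirc_row r _) (sum_gCirc_col hgcd _),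
    sum_range_eq_sub_of_fib_rec hrec, hrec 0, hL0, hL1]
  norm_num
end

section
/- Let n≥2 be an integer and g a nonnegative integer with gcd(n,g)=1. Then det C_{n,g}(J) = det(Q_g) · [ (1 − J_{n+1})^{n−1} + 2^{n−1}·J_n^{n−2} · Σ_{i=1}^{n−1} J_i · ((1 − J_{n+1})/(2J_n))^{i−1} ]. -/
/-- `Q_g`: the `g`-circulant matrix with first row `(1,0,…,0)`. -/
def Qg (n g : ℕ) : Matrix (Fin n) (Fin n) ℝ :=
  gCirc n g (fun m => if m = 0 then (1 : ℝ) else 0)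

/-!
Row `i` of `C_{n,g}(a)` is row `i g mod n` of the ordinary circulant `C_{n,1}(a)`, hence
`C_{n,g}(a) = Q_g C_{n,1}(a)` for every `g`.

For `C = C_{n,1}(J)` with `J` any sequence with `J₀ = 0`, `J₁ = 1`, `J_{m+2} = p J_{m+1} + q J_m`
(Jacobsthal: `p = 1`, `q = 2`) and `n = N + 2`, the unitriangular row operations
`Rᵢ ↦ Rᵢ - p Rᵢ₊₁ - q Rᵢ₊₂` (terms with an index `≥ n` dropped) use the recurrence to turn row
`i < N` into `u eᵢ - v eᵢ₊₁` with `u = 1 - J_{n+1}`, `v = q J_n`, row `N` into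
`(q J₁, …, q J_N, 1 - p J_n, 0)`, and leave the last row, which ends in `J₁ = 1`. So the last
column becomes `e_{N+1}`, and the remaining `(N+1) × (N+1)` matrix, bidiagonal except for its
last row `s`, has determinant `∑ₖ sₖ uᵏ v^{N-k}`, which rearranges into the stated formula.
-/

open Matrix Finset

section Circulant

variable {α : Type*}

theorem gCirc_one_apply (a : ℕ → α) {n : ℕ} (i j : Fin n) :
    gCirc n 1 a i j = a (if (i : ℕ) ≤ j then j - i else j + n - i) := by
  simp only [gCirc, of_apply, mul_one, Nat.mod_eq_of_lt i.isLt]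
  split_ifs with h
  · rw [show (j : ℕ) + (n - i) = j - i + n by omega, Nat.add_mod_right,
      Nat.mod_eq_of_lt (by omega)]
  · rw [show (j : ℕ) + (n - i) = j + n - i by omega, Nat.mod_eq_of_lt (by omega)]

theorem gCirc_eq_submatrix_gCirc_one (g : ℕ) (a : ℕ → α) (n : ℕ) :
    gCirc n g a =
      (gCirc n 1 a).submatrix (fun i : Fin n => ⟨i * g % n, Nat.mod_lt _ i.pos⟩) id := by
  ext i j
  simp [gCirc, Nat.mod_eq_of_lt (Nat.mod_lt _ i.pos)]

theorem gCirc_one_ite_zero_eq_one [Zero α] [One α] (n : ℕ) :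
    gCirc n 1 (fun m => if m = 0 then (1 : α) else 0) = 1 := by
  ext i j
  simp only [gCirc_one_apply, one_apply, Fin.ext_iff]
  split_ifs <;> first | rfl | omega

theorem gCirc_eq_mul_gCirc_one [NonAssocSemiring α] (g : ℕ) (a : ℕ → α) (n : ℕ) :
    gCirc n g a = gCirc n g (fun m => if m = 0 then 1 else 0) * gCirc n 1 a := by
  rw [gCirc_eq_submatrix_gCirc_one g, gCirc_eq_submatrix_gCirc_one g _ n,
    gCirc_one_ite_zero_eq_one, ← submatrix_id_id (gCirc n 1 a),
    ← submatrix_mul _ _ _ _ _ Function.bijective_id, one_mul]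
  rfl

theorem gCirc_one_apply_of_add (a : ℕ → α) {n : ℕ} {i j : Fin n} {d : ℕ} (hd : d < n)
    (h : (i : ℕ) + d = j ∨ (i : ℕ) + d = j + n) : gCirc n 1 a i j = a d := by
  rw [gCirc_one_apply]
  congr 1
  split_ifs <;> omega

end Circulant

section Determinant

variable {R : Type*} [CommRing R]

theorem det_eq_det_submatrix_castSucc_of_col_last {n : ℕ}
    (A : Matrix (Fin (n + 1)) (Fin (n + 1)) R)
    (hA : ∀ i, A i (Fin.last n) = if i = Fin.last n then 1 else 0) :
    A.det = (A.submatrix Fin.castSucc Fin.castSucc).det := by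
  rw [det_succ_column A (Fin.last n), sum_eq_single (Fin.last n)]
  · simp [hA, Fin.succAbove_last, ← two_mul]
  · intro i _ hi
    simp [hA, hi]
  · simp

theorem det_eq_sum_of_bidiagonal_rows (u v : R) {N : ℕ}
    (A : Matrix (Fin (N + 1)) (Fin (N + 1)) R)
    (hA : ∀ i : Fin N, A i.castSucc = u • Pi.single i.castSucc 1 - v • Pi.single i.succ 1) :
    A.det = ∑ k : Fin (N + 1), A (Fin.last N) k * u ^ (k : ℕ) * v ^ (N - k) := by
  induction N with
  | zero => simp [det_unique]
  | succ N ih =>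
    have hentry (i : Fin (N + 1)) (k : Fin (N + 2)) :
        A i.castSucc k = (if k = i.castSucc then u else 0) - if k = i.succ then v else 0 := by
      simp [hA i, Pi.single_apply]
    have hminor : (A.submatrix Fin.succ Fin.succ).det =
        ∑ k : Fin (N + 1), A (Fin.last (N + 1)) k.succ * u ^ (k : ℕ) * v ^ (N - k) := by
      refine ih _ fun i => funext fun k => ?_
      rw [submatrix_apply, Fin.succ_castSucc, hentry]
      simp [Pi.single_apply]
    have hlower : (A.submatrix Fin.castSucc Fin.succ).det = (-v) ^ (N + 1) := by
      rw [det_of_isLowerTriangular]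
      · simp [hentry, Fin.ext_iff]
      · intro i k (hik : (i : ℕ) < k)
        simp [hentry, Fin.ext_iff, hik.ne', show (k : ℕ) + 1 ≠ i by omega]
    -- Expanding along column 0, only row 0 (entry `u`) and the last row contribute.
    rw [det_succ_column_zero, Fin.sum_univ_succ, Fin.sum_univ_castSucc, sum_eq_zero]
    · simp only [Fin.succ_last, Fin.succAbove_zero, Fin.succAbove_last, hminor, hlower]
      have h00 : A 0 0 = u := by simpa using hentry 0 0
      have hsign : (-1 : R) ^ (N + 1) * (-v) ^ (N + 1) = v ^ (N + 1) := by rw [← mul_pow]; simp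
      rw [Fin.sum_univ_succ (n := N + 1), add_comm]
      simp only [Fin.val_zero, Fin.val_last, Fin.val_succ, pow_zero, one_mul, mul_one, zero_add,
        h00, Nat.add_sub_add_right, Nat.sub_zero, Nat.succ_eq_add_one]
      rw [mul_sum]
      congr 1
      · linear_combination A (Fin.last (N + 1)) 0 * hsign
      · exact sum_congr rfl fun k _ => by ring
    · intro i _
      rw [Fin.succ_castSucc, hentry]
      simp [Fin.ext_iff]

end Determinant

section Lucas

variable {R : Type*} [CommRing R]

def lucasRowOp (p q : R) (n : ℕ) : Matrix (Fin n) (Fin n) R :=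
  of fun i k => if (k : ℕ) = i then 1 else if (k : ℕ) = i + 1 then -p
    else if (k : ℕ) = i + 2 then -q else 0

theorem det_lucasRowOp (p q : R) (n : ℕ) : (lucasRowOp p q n).det = 1 := by
  rw [det_of_isUpperTriangular]
  · simp [lucasRowOp]
  · intro i k (hki : (k : ℕ) < i)
    simp only [lucasRowOp, of_apply]
    split_ifs <;> first | rfl | omega

theorem lucasRowOp_castSucc_castSucc (p q : R) {N : ℕ} (i : Fin N) :
    lucasRowOp p q (N + 2) i.castSucc.castSucc = Pi.single i.castSucc.castSucc 1 -
      p • Pi.single i.succ.castSucc 1 - q • Pi.single i.succ.succ 1 := by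
  ext k
  simp only [lucasRowOp, of_apply, Pi.sub_apply, Pi.smul_apply, Pi.single_apply, Fin.ext_iff,
    Fin.val_castSucc, Fin.val_succ, smul_eq_mul]
  split_ifs <;> first | (exfalso; omega) | ring

theorem lucasRowOp_castSucc_last (p q : R) (N : ℕ) :
    lucasRowOp p q (N + 2) (Fin.last N).castSucc =
      Pi.single (Fin.last N).castSucc 1 - p • Pi.single (Fin.last (N + 1)) 1 := by
  ext k
  simp only [lucasRowOp, of_apply, Pi.sub_apply, Pi.smul_apply, Pi.single_apply, Fin.ext_iff,
    Fin.val_castSucc, Fin.val_last, smul_eq_mul]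
  split_ifs <;> first | (exfalso; omega) | ring

theorem lucasRowOp_last (p q : R) (N : ℕ) :
    lucasRowOp p q (N + 1) (Fin.last N) = Pi.single (Fin.last N) 1 := by
  ext k
  simp only [lucasRowOp, of_apply, Pi.single_apply, Fin.ext_iff, Fin.val_last]
  split_ifs <;> first | rfl | omega

variable {p q : R} {J : ℕ → R} (hJ0 : J 0 = 0) (hJ1 : J 1 = 1)
  (hrec : ∀ m, J (m + 2) = p * J (m + 1) + q * J m)
include hJ0 hJ1 hrec

theorem lucasRowOp_mul_gCirc_castSucc_castSucc {N : ℕ} (i : Fin N) :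
    (lucasRowOp p q (N + 2) * gCirc (N + 2) 1 (fun m => J (m + 1))) i.castSucc.castSucc =
      (1 - J (N + 3)) • Pi.single i.castSucc.castSucc 1 -
        (q * J (N + 2)) • Pi.single i.succ.castSucc 1 := by
  ext k
  rw [mul_apply_eq_vecMul, lucasRowOp_castSucc_castSucc, sub_vecMul, sub_vecMul, smul_vecMul,
    smul_vecMul, single_one_vecMul, single_one_vecMul, single_one_vecMul]
  have hi := i.isLt
  have e₀ : (i.castSucc.castSucc : ℕ) = i := rfl
  have e₁ : (i.succ.castSucc : ℕ) = i + 1 := rfl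
  have e₂ : (i.succ.succ : ℕ) = i + 2 := rfl
  simp only [Pi.sub_apply, Pi.smul_apply, smul_eq_mul, row, Pi.single_apply, Fin.ext_iff,
    Fin.val_castSucc, Fin.val_succ]
  by_cases hk0 : (k : ℕ) = i
  · rw [gCirc_one_apply_of_add _ (d := 0) (by omega) (by omega),
      gCirc_one_apply_of_add _ (d := N + 1) (by omega) (by omega),
      gCirc_one_apply_of_add _ (d := N) (by omega) (by omega), if_pos hk0, if_neg (by omega)]
    linear_combination (norm := ring_nf) hrec (N + 1) + hJ1
  by_cases hk1 : (k : ℕ) = i + 1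
  · rw [gCirc_one_apply_of_add _ (d := 1) (by omega) (by omega),
      gCirc_one_apply_of_add _ (d := 0) (by omega) (by omega),
      gCirc_one_apply_of_add _ (d := N + 1) (by omega) (by omega), if_neg hk0, if_pos hk1]
    linear_combination (norm := ring_nf) hrec 0 + q * hJ0
  obtain ⟨x, hx, hxN⟩ : ∃ x, ((i : ℕ) + 2 + x = k ∨ (i : ℕ) + 2 + x = k + (N + 2)) ∧ x < N :=
    ⟨if (i : ℕ) + 2 ≤ k then k - i - 2 else k + N - i, by split_ifs <;> omega,
      by split_ifs <;> omega⟩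
  rw [gCirc_one_apply_of_add _ (d := x + 2) (by omega) (by omega),
    gCirc_one_apply_of_add _ (d := x + 1) (by omega) (by omega),
    gCirc_one_apply_of_add _ (d := x) (by omega) (by omega), if_neg hk0, if_neg hk1]
  linear_combination (norm := ring_nf) hrec (x + 1)

theorem lucasRowOp_mul_gCirc_castSucc_last {N : ℕ} (k : Fin (N + 2)) :
    (lucasRowOp p q (N + 2) * gCirc (N + 2) 1 (fun m => J (m + 1))) (Fin.last N).castSucc k =
      if (k : ℕ) < N then q * J (k + 1) else if (k : ℕ) = N then 1 - p * J (N + 2) else 0 := by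
  rw [mul_apply_eq_vecMul, lucasRowOp_castSucc_last, sub_vecMul, smul_vecMul, single_one_vecMul,
    single_one_vecMul]
  simp only [Pi.sub_apply, Pi.smul_apply, smul_eq_mul, row]
  have hk := k.isLt
  have e₀ : ((Fin.last N).castSucc : ℕ) = N := rfl
  have e₁ : (Fin.last (N + 1) : ℕ) = N + 1 := rfl
  split_ifs with hkN hkN'
  · rw [gCirc_one_apply_of_add _ (d := k + 2) (by omega) (by omega),
      gCirc_one_apply_of_add _ (d := k + 1) (by omega) (by omega)]
    linear_combination (norm := ring_nf) hrec (k + 1)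
  · rw [gCirc_one_apply_of_add _ (d := 0) (by omega) (by omega),
      gCirc_one_apply_of_add _ (d := N + 1) (by omega) (by omega), hJ1]
  · rw [gCirc_one_apply_of_add _ (d := 1) (by omega) (by omega),
      gCirc_one_apply_of_add _ (d := 0) (by omega) (by omega)]
    linear_combination (norm := ring_nf) hrec 0 + q * hJ0

theorem lucasRowOp_mul_gCirc_apply_last {N : ℕ} (i : Fin (N + 2)) :
    (lucasRowOp p q (N + 2) * gCirc (N + 2) 1 (fun m => J (m + 1))) i (Fin.last (N + 1)) =
      if i = Fin.last (N + 1) then 1 else 0 := by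
  induction i using Fin.lastCases with
  | last =>
    rw [mul_apply_eq_vecMul, lucasRowOp_last, single_one_vecMul, row,
      gCirc_one_apply_of_add _ (d := 0) (by omega) (by simp), hJ1, if_pos rfl]
  | cast i =>
    rw [if_neg (Fin.castSucc_ne_last i)]
    induction i using Fin.lastCases with
    | last => simpa using lucasRowOp_mul_gCirc_castSucc_last hJ0 hJ1 hrec (Fin.last (N + 1))
    | cast i =>
      rw [lucasRowOp_mul_gCirc_castSucc_castSucc hJ0 hJ1 hrec]
      have hi := i.isLt
      simp [Fin.ext_iff, hi.ne', show N + 1 ≠ (i : ℕ) by omega]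

theorem det_gCirc_one_lucas (N : ℕ) :
    (gCirc (N + 2) 1 (fun m => J (m + 1))).det = (1 - J (N + 3)) ^ (N + 1) +
      q * ∑ k ∈ range (N + 1), J (k + 1) * (1 - J (N + 3)) ^ k * (q * J (N + 2)) ^ (N - k) := by
  set B := lucasRowOp p q (N + 2) * gCirc (N + 2) 1 (fun m => J (m + 1))
  have hrows (i : Fin N) : B.submatrix Fin.castSucc Fin.castSucc i.castSucc =
      (1 - J (N + 3)) • Pi.single i.castSucc 1 - (q * J (N + 2)) • Pi.single i.succ 1 := by
    ext k
    simp [B, lucasRowOp_mul_gCirc_castSucc_castSucc hJ0 hJ1 hrec, Pi.single_apply, Fin.ext_iff]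
  have hB : (gCirc (N + 2) 1 (fun m => J (m + 1))).det = B.det := by
    rw [det_mul, det_lucasRowOp, one_mul]
  rw [hB,
    det_eq_det_submatrix_castSucc_of_col_last B (lucasRowOp_mul_gCirc_apply_last hJ0 hJ1 hrec),
    det_eq_sum_of_bidiagonal_rows _ _ _ hrows, Fin.sum_univ_castSucc]
  simp only [submatrix_apply, Fin.val_castSucc, Fin.val_last, B,
    lucasRowOp_mul_gCirc_castSucc_last hJ0 hJ1 hrec, Fin.is_lt, if_true, lt_irrefl, if_false,
    Nat.sub_self, pow_zero, mul_one]
  rw [Fin.sum_univ_eq_sum_range (fun k => q * J (k + 1) * (1 - J (N + 3)) ^ k *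
    (q * J (N + 2)) ^ (N - k)), sum_range_succ, mul_add, mul_sum, Nat.sub_self, pow_zero,
    mul_one]
  simp only [← mul_assoc]
  have hN : J (N + 3) = p * J (N + 2) + q * J (N + 1) := hrec (N + 1)
  linear_combination (1 - J (N + 3)) ^ N * hN

end Lucas

theorem pow_mul_sum_mul_div_pow {K : Type*} [Field K] (a : ℕ → K) {u v : K} (hv : v ≠ 0)
    (N : ℕ) :
    v ^ N * ∑ k ∈ range (N + 1), a k * (u / v) ^ k =
      ∑ k ∈ range (N + 1), a k * u ^ k * v ^ (N - k) := by
  rw [mul_sum]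
  refine sum_congr rfl fun k hk => ?_
  obtain ⟨j, rfl⟩ : ∃ j, N = k + j := ⟨N - k, by have := mem_range.mp hk; omega⟩
  rw [Nat.add_sub_cancel_left, pow_add, div_pow]
  field_simp

theorem det_gCirc_one_lucas' {K : Type*} [Field K] {p q : K} {J : ℕ → K} (hJ0 : J 0 = 0)
    (hJ1 : J 1 = 1) (hrec : ∀ m, J (m + 2) = p * J (m + 1) + q * J m) {n : ℕ} (hn : 2 ≤ n)
    (hJn : q * J n ≠ 0) :
    (gCirc n 1 (fun m => J (m + 1))).det = (1 - J (n + 1)) ^ (n - 1) +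
      q ^ (n - 1) * J n ^ (n - 2) *
        ∑ i ∈ Icc 1 (n - 1), J i * ((1 - J (n + 1)) / (q * J n)) ^ (i - 1) := by
  obtain ⟨N, rfl⟩ : ∃ N, n = N + 2 := ⟨n - 2, by omega⟩
  rw [det_gCirc_one_lucas hJ0 hJ1 hrec, ← pow_mul_sum_mul_div_pow _ hJn,
    ← Ico_add_one_right_eq_Icc, sum_Ico_eq_sum_range]
  simp only [show N + 2 - 1 = N + 1 by omega, Nat.add_sub_cancel, add_comm 1]
  ring

theorem one_le_jacobsthal_succ {J : ℕ → ℝ} (hJ0 : J 0 = 0) (hJ1 : J 1 = 1)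
    (hrec : ∀ m, J (m + 2) = J (m + 1) + 2 * J m) : ∀ m, 1 ≤ J (m + 1)
  | 0 => hJ1.ge
  | 1 => by rw [hrec, hJ1, hJ0]; norm_num
  | m + 2 => by
    have := one_le_jacobsthal_succ hJ0 hJ1 hrec m
    have := one_le_jacobsthal_succ hJ0 hJ1 hrec (m + 1)
    rw [hrec]
    linarith

theorem det_gCirc_jacobsthal_general
    (J : ℕ → ℝ) (hJ0 : J 0 = 0) (hJ1 : J 1 = 1)
    (hrec : ∀ m : ℕ, J (m + 2) = J (m + 1) + 2 * J m)
    (n r : ℕ) (hn : 2 ≤ n) :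
    (gCirc n r (fun m => J (m + 1))).det =
      (Qg n r).det *
        ((1 - J (n + 1)) ^ (n - 1) +
          2 ^ (n - 1) * J n ^ (n - 2) *
            ∑ i ∈ Finset.Icc 1 (n - 1),
              J i * ((1 - J (n + 1)) / (2 * J n)) ^ (i - 1)) := by
  have hJn : (2 : ℝ) * J n ≠ 0 := by
    obtain ⟨m, rfl⟩ : ∃ m, n = m + 1 := ⟨n - 1, by omega⟩
    have := one_le_jacobsthal_succ hJ0 hJ1 hrec m
    exact mul_ne_zero two_ne_zero (by linarith)
  rw [gCirc_eq_mul_gCirc_one, det_mul,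
    det_gCirc_one_lucas' hJ0 hJ1 (p := 1) (by simpa using hrec) hn hJn]
  rfl

/-- Determinant of the g-circulant matrix of Jacobsthal numbers. -/
theorem det_gCirc_jacobsthal
    (J : ℕ → ℝ) (hJ0 : J 0 = 0) (hJ1 : J 1 = 1)
    (hrec : ∀ m : ℕ, J (m + 2) = J (m + 1) + 2 * J m)
    (n r : ℕ) (hn : 2 ≤ n) (hgcd : Nat.gcd n r = 1) :
    (gCirc n r (fun m => J (m + 1))).det =
      (Qg n r).det *
        ((1 - J (n + 1)) ^ (n - 1) +
          2 ^ (n - 1) * J n ^ (n - 2) *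
            ∑ i ∈ Finset.Icc 1 (n - 1),
              J i * ((1 - J (n + 1)) / (2 * J n)) ^ (i - 1)) :=
  det_gCirc_jacobsthal_general J hJ0 hJ1 hrec n r hn
end

section
/- Let n>2 be an integer and g a nonnegative integer with gcd(n,g)=1. Set A = q(w_n − w_0), B = w_1 − w_{n+1} and z_n = −w_2 w_n/w_1 + w_1 + Σ_{i=1}^{n−2}(−w_2 w_{i+1}/w_1 + w_{i+2})·(A/B)^{n−(i+1)}, and assume w_1 ≠ 0, B ≠ 0 and z_n ≠ 0. Then the inverse of the g-circulant matrix C_{n,g}(W) with first row (w_1,w_2,…,w_n) equals (1/z_n)·C·Q_gᵀ, where C is the circulant matrix with first row (c_0,…,c_{n−1}) given by c_0 = 1 + Σ_{i=1}^{n−2}(w_{n+2−i} − (w_2/w_1)w_{n+1−i})·A^{i−1}/B^i, c_1 = −w_2/w_1 + q·Σ_{i=1}^{n−2}(w_{n+1−i} − w_2 w_{n−i}/w_1)·A^{i−1}/B^i, and c_j = −(w_3 − w_2²/w_1)·A^{j−2}/B^{j−1} for 2 ≤ j ≤ n−1. -/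
open Matrix

/-- `circ c`: the circulant (`1`-circulant) matrix with first row `(c 0, …, c (n-1))`. -/
def circ (n : ℕ) (c : ℕ → ℝ) : Matrix (Fin n) (Fin n) ℝ :=
  gCirc n 1 c

/-!
Write `C_{n,g}(W) = Q_g * circ (w_1, …, w_n)`. As `gcd (n, g) = 1`, `Q_g` is a permutation
matrix, so `Q_g * Q_gᵀ = 1` and it suffices that `circ (w_1, …, w_n) * circ c = z_n • 1`, i.e.
that the cyclic convolution of `(w_{m+1})` with `c` is `z_n` at `0` and vanishes elsewhere.

Everything is driven by `e_m = w_{m+1} - (w_2 / w_1) w_m` (`elimOne`), a solution of the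
recurrence with `e_1 = 0`, through the addition formula `e_2 v_{a+b} = e_{a+1} v_{b+1} + q e_a v_b`,
valid for every solution `v`. For `v = w` it collapses `c_0 w_{t+1} + c_1 w_t` into `e_t` plus a
geometric sum with ratio `ρ = A / B`; for `v_m = w_{n+m} - w_m` (`periodDiff`) it gives
`B e_{t+2} = A e_{t+1} - e_2 v_{t+1}`, hence `e_{s+1} = -(e_2 / B) ∑_{i<s} ρ^i v_{s-i}`.
The coefficients `c_j = -(e_2 / B) ρ^{j-2}`, `j ≥ 2`, make the convolution reduce to exactly
this expression, plus, at `0`, the term `B c_0 + e_2 ρ^{n-2} = z_n`.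
-/
open Finset

section GCirculant

variable {n : ℕ}

def mulMod (n g : ℕ) (i : Fin n) : Fin n := ⟨i * g % n, Nat.mod_lt _ i.pos⟩

theorem mulMod_injective {g : ℕ} (h : Nat.Coprime n g) : Function.Injective (mulMod n g) := by
  intro i j hij
  have hmod : i * g ≡ j * g [MOD n] := Fin.ext_iff.mp hij
  have := Nat.ModEq.cancel_right_of_coprime h hmod
  exact Fin.ext (by rwa [Nat.ModEq, Nat.mod_eq_of_lt i.isLt, Nat.mod_eq_of_lt j.isLt] at this)

theorem gCirc_eq_submatrix {α : Type*} (g : ℕ) (a : ℕ → α) :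
    gCirc n g a = (gCirc n 1 a).submatrix (mulMod n g) id := by
  ext i j
  simp [gCirc, mulMod]

theorem circ_eq_transpose_circulant (u : ℕ → ℝ) :
    circ n u = (circulant fun k : Fin n => u k)ᵀ := by
  ext i j
  simp [circ, gCirc, circulant_apply, Fin.sub_def, Nat.mod_eq_of_lt i.isLt, add_comm]

theorem Qg_eq_submatrix (g : ℕ) :
    Qg n g = (1 : Matrix (Fin n) (Fin n) ℝ).submatrix (mulMod n g) id := by
  have h1 : circ n (fun m => if m = 0 then 1 else 0) = 1 := by
    rw [circ_eq_transpose_circulant, Fin.circulant_ite, transpose_one]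
  rw [Qg, gCirc_eq_submatrix, ← h1, circ]

theorem gCirc_eq_Qg_mul_circ (g : ℕ) (a : ℕ → ℝ) : gCirc n g a = Qg n g * circ n a := by
  rw [Qg_eq_submatrix, ← submatrix_id_id (circ n a),
    ← submatrix_mul _ _ _ _ _ Function.bijective_id, Matrix.one_mul, gCirc_eq_submatrix]
  rfl

theorem Qg_mul_transpose {g : ℕ} (h : Nat.Coprime n g) : Qg n g * (Qg n g)ᵀ = 1 := by
  rw [Qg_eq_submatrix, transpose_submatrix, transpose_one,
    ← submatrix_mul _ _ _ _ _ Function.bijective_id, Matrix.one_mul,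
    submatrix_one _ (mulMod_injective h)]

theorem circ_mul_circ_eq_smul_one {a c : ℕ → ℝ} {z : ℝ}
    (h : ∀ k : Fin n, ∑ j : Fin n, a (k - j : Fin n) * c j = if (k : ℕ) = 0 then z else 0) :
    circ n a * circ n c = z • 1 := by
  have hv : (circulant fun k : Fin n => a k) *ᵥ (fun k => c k) =
      z • fun k : Fin n => if (k : ℕ) = 0 then 1 else 0 := by
    ext k
    simpa [mulVec, dotProduct, circulant_apply] using h k
  rw [circ_eq_transpose_circulant, circ_eq_transpose_circulant, ← transpose_mul,
    Fin.circulant_mul_comm, Fin.circulant_mul, hv, circulant_smul, Fin.circulant_ite,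
    transpose_smul, transpose_one]

end GCirculant

theorem Fin.sum_sub_eq_sum_range_add_sum_range {M : Type*} [AddCommMonoid M] {n : ℕ}
    (f : ℕ → ℕ → M) (k : Fin n) :
    ∑ j : Fin n, f (k - j : Fin n) j =
      ∑ j ∈ range (k + 1), f (k - j) j + ∑ x ∈ range (n - (k + 1)), f (n - 1 - x) (k + 1 + x) := by
  simp only [Fin.val_sub]
  rw [Fin.sum_univ_eq_sum_range (fun j => f ((n - j + k) % n) j),
    ← sum_range_add_sum_Ico _ k.isLt, sum_Ico_eq_sum_range]
  congr 1
  · refine sum_congr rfl fun j hj => ?_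
    have hj : j ≤ k := Nat.lt_succ_iff.mp (mem_range.mp hj)
    rw [show n - j + k = n + (k - j) by omega, Nat.add_mod_left, Nat.mod_eq_of_lt (by omega)]
  · refine sum_congr rfl fun x hx => ?_
    have hx := mem_range.mp hx
    rw [Nat.mod_eq_of_lt (by omega), show n - (k + 1 + x) + k = n - 1 - x by omega]

theorem sum_Icc_one_eq_sum_range {M : Type*} [AddCommMonoid M] (f : ℕ → M) (N : ℕ) :
    ∑ i ∈ Icc 1 N, f i = ∑ k ∈ range N, f (k + 1) := by
  rw [← Ico_add_one_right_eq_Icc, sum_Ico_eq_sum_range, add_tsub_cancel_right]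
  simp only [add_comm]

theorem eq_sum_range_pow_mul_of_succ {R : Type*} [Semiring R] {x y : ℕ → R} {ρ : R}
    (h0 : x 0 = 0) (h : ∀ t, x (t + 1) = ρ * x t + y (t + 1)) (s : ℕ) :
    x s = ∑ i ∈ range s, ρ ^ i * y (s - i) := by
  induction s with
  | zero => simp [h0]
  | succ s ih =>
    rw [h, ih, sum_range_succ', mul_sum]
    simp [pow_succ', mul_assoc, add_comm]

section Recurrence

variable {R : Type*} [CommRing R] {p q : R}

def HoradamRec (p q : R) (u : ℕ → R) : Prop := ∀ m, u (m + 2) = p * u (m + 1) + q * u m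

theorem HoradamRec.mul_apply_add {u v : ℕ → R} (hu : HoradamRec p q u) (hv : HoradamRec p q v)
    (hu1 : u 1 = 0) (a b : ℕ) : u 2 * v (a + b) = u (a + 1) * v (b + 1) + q * u a * v b := by
  induction a generalizing b with
  | zero =>
    rw [zero_add]
    linear_combination v b * hu 0 + (p * v b - v (b + 1)) * hu1
  | succ a ih =>
    rw [show a + 1 + b = a + (b + 1) by ring]
    linear_combination ih (b + 1) - v (b + 1) * hu a + u (a + 1) * hv b

end Recurrence

section Horadam

variable {K : Type*} [Field K] {p q : K} {w : ℕ → K} {n : ℕ} {ρ A B zn : K} {c : ℕ → K}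

def elimOne (w : ℕ → K) (m : ℕ) : K := w (m + 1) - w 2 / w 1 * w m

def periodDiff (w : ℕ → K) (n m : ℕ) : K := w (n + m) - w m

theorem HoradamRec.elimOne (hw : HoradamRec p q w) : HoradamRec p q (elimOne w) := fun m => by
  unfold _root_.elimOne
  linear_combination hw (m + 1) - w 2 / w 1 * hw m

theorem HoradamRec.periodDiff (hw : HoradamRec p q w) (n : ℕ) :
    HoradamRec p q (periodDiff w n) := fun m => by
  unfold _root_.periodDiff
  linear_combination hw (n + m) - hw m

theorem elimOne_one (hw1 : w 1 ≠ 0) : elimOne w 1 = 0 := by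
  simp [elimOne, hw1]

theorem elimOne_succ_eq_sum (hw : HoradamRec p q w) (hw1 : w 1 ≠ 0) (hB : B = w 1 - w (n + 1))
    (hA : ρ * B = q * (w n - w 0)) (hBne : B ≠ 0) (s : ℕ) :
    elimOne w (s + 1) = -(elimOne w 2 / B) * ∑ i ∈ range s, ρ ^ i * periodDiff w n (s - i) := by
  have hκ : B * (elimOne w 2 / B) = elimOne w 2 := mul_div_cancel₀ _ hBne
  have step : ∀ t, elimOne w (t + 1 + 1) =
      ρ * elimOne w (t + 1) + -(elimOne w 2 / B) * periodDiff w n (t + 1) := by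
    intro t
    have h := hw.elimOne.mul_apply_add (hw.periodDiff n) (elimOne_one hw1) (t + 1) 0
    simp only [periodDiff, add_zero] at h ⊢
    apply mul_left_cancel₀ hBne
    linear_combination h + elimOne w (t + 2) * hB - elimOne w (t + 1) * hA
      + (w (n + (t + 1)) - w (t + 1)) * hκ
  rw [eq_sum_range_pow_mul_of_succ (x := fun t => elimOne w (t + 1))
    (y := fun t => -(elimOne w 2 / B) * periodDiff w n t) (elimOne_one hw1) step s, mul_sum]
  exact sum_congr rfl fun i _ => by ring

theorem coeff_zero_mul_add_coeff_one_mul (hw : HoradamRec p q w) (hw1 : w 1 ≠ 0)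
    (hc0 : c 0 = 1 + B⁻¹ * ∑ k ∈ range (n - 2), elimOne w (n - k) * ρ ^ k)
    (hc1 : c 1 = -w 2 / w 1 + q * (B⁻¹ * ∑ k ∈ range (n - 2), elimOne w (n - 1 - k) * ρ ^ k))
    (t : ℕ) :
    c 0 * w (t + 1) + c 1 * w t =
      elimOne w t + elimOne w 2 / B * ∑ k ∈ range (n - 2), ρ ^ k * w (n - 1 - k + t) := by
  have hsum : (∑ k ∈ range (n - 2), elimOne w (n - k) * ρ ^ k) * w (t + 1)
      + q * (∑ k ∈ range (n - 2), elimOne w (n - 1 - k) * ρ ^ k) * w t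
      = elimOne w 2 * ∑ k ∈ range (n - 2), ρ ^ k * w (n - 1 - k + t) := by
    rw [sum_mul, mul_sum, sum_mul, mul_sum, ← sum_add_distrib]
    refine sum_congr rfl fun k hk => ?_
    have h := hw.elimOne.mul_apply_add hw (elimOne_one hw1) (n - 1 - k) t
    rw [show n - 1 - k + 1 = n - k by have := mem_range.mp hk; omega] at h
    linear_combination -ρ ^ k * h
  have he : elimOne w t = w (t + 1) - w 2 / w 1 * w t := rfl
  rw [hc0, hc1]
  linear_combination B⁻¹ * hsum - he

theorem sum_conv_succ_eq_zero (hw : HoradamRec p q w) (hw1 : w 1 ≠ 0) (hB : B = w 1 - w (n + 1))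
    (hA : ρ * B = q * (w n - w 0)) (hBne : B ≠ 0)
    (hc0 : c 0 = 1 + B⁻¹ * ∑ k ∈ range (n - 2), elimOne w (n - k) * ρ ^ k)
    (hc1 : c 1 = -w 2 / w 1 + q * (B⁻¹ * ∑ k ∈ range (n - 2), elimOne w (n - 1 - k) * ρ ^ k))
    (hc : ∀ k < n - 2, c (k + 2) = -(elimOne w 2 / B) * ρ ^ k) {s : ℕ} (hs : s + 1 < n) :
    ∑ j ∈ range (s + 2), w (s + 1 - j + 1) * c j
      + ∑ x ∈ range (n - (s + 2)), w (n - 1 - x + 1) * c (s + 2 + x) = 0 := by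
  have head : ∑ j ∈ range (s + 2), w (s + 1 - j + 1) * c j = w (s + 2) * c 0 + w (s + 1) * c 1
      - elimOne w 2 / B * ∑ i ∈ range s, ρ ^ i * w (s - i) := by
    have : ∀ i ∈ range s, w (s + 1 - (i + 1 + 1) + 1) * c (i + 1 + 1)
        = -(elimOne w 2 / B) * (ρ ^ i * w (s - i)) := fun i hi => by
      have := mem_range.mp hi
      rw [hc i (by omega), show s + 1 - (i + 1 + 1) + 1 = s - i by omega]
      ring
    rw [sum_range_succ', sum_range_succ', sum_congr rfl this, ← mul_sum]
    simp only [tsub_zero, zero_add, add_tsub_cancel_right]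
    ring
  have tail : ∑ x ∈ range (n - (s + 2)), w (n - 1 - x + 1) * c (s + 2 + x)
      = -(elimOne w 2 / B) *
          ∑ x ∈ range (n - (s + 2)), ρ ^ (s + x) * w (n - 1 - (s + x) + (s + 1)) := by
    rw [mul_sum]
    refine sum_congr rfl fun x hx => ?_
    have := mem_range.mp hx
    rw [show s + 2 + x = s + x + 2 by ring, hc _ (by omega),
      show n - 1 - (s + x) + (s + 1) = n - 1 - x + 1 by omega]
    ring
  have slide := coeff_zero_mul_add_coeff_one_mul hw hw1 hc0 hc1 (s + 1)
  rw [show n - 2 = s + (n - (s + 2)) by omega, sum_range_add] at slide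
  have diff : ∑ i ∈ range s, ρ ^ i * w (n - 1 - i + (s + 1)) - ∑ i ∈ range s, ρ ^ i * w (s - i)
      = ∑ i ∈ range s, ρ ^ i * periodDiff w n (s - i) := by
    rw [← sum_sub_distrib]
    refine sum_congr rfl fun i hi => ?_
    have := mem_range.mp hi
    rw [periodDiff, show n - 1 - i + (s + 1) = n + (s - i) by omega]
    ring
  rw [head, tail]
  linear_combination slide + elimOne w 2 / B * diff + elimOne_succ_eq_sum hw hw1 hB hA hBne s

theorem sum_conv_zero_eq (hw : HoradamRec p q w) (hw1 : w 1 ≠ 0) (hB : B = w 1 - w (n + 1))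
    (hA : ρ * B = q * (w n - w 0)) (hBne : B ≠ 0)
    (hc0 : c 0 = 1 + B⁻¹ * ∑ k ∈ range (n - 2), elimOne w (n - k) * ρ ^ k)
    (hc1 : c 1 = -w 2 / w 1 + q * (B⁻¹ * ∑ k ∈ range (n - 2), elimOne w (n - 1 - k) * ρ ^ k))
    (hc : ∀ k < n - 2, c (k + 2) = -(elimOne w 2 / B) * ρ ^ k) (hn : 2 ≤ n)
    (hzn : zn = B * c 0 + elimOne w 2 * ρ ^ (n - 2)) :
    w 1 * c 0 + ∑ x ∈ range (n - 1), w (n - 1 - x + 1) * c (1 + x) = zn := by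
  obtain ⟨m, rfl⟩ : ∃ m, n = m + 2 := ⟨n - 2, by omega⟩
  have slide := coeff_zero_mul_add_coeff_one_mul hw hw1 hc0 hc1 (m + 2)
  have hsucc := elimOne_succ_eq_sum hw hw1 hB hA hBne (m + 1)
  simp only [show m + 2 - 1 = m + 1 by omega, add_tsub_cancel_right] at hc slide hzn ⊢
  rw [sum_range_succ] at hsucc
  have hκ : B * (elimOne w 2 / B) = elimOne w 2 := mul_div_cancel₀ _ hBne
  have tail : ∑ x ∈ range (m + 1), w (m + 1 - x + 1) * c (1 + x)
      = w (m + 2) * c 1 - elimOne w 2 / B * ∑ x ∈ range m, ρ ^ x * w (m + 1 - x) := by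
    have : ∀ x ∈ range m, w (m + 1 - (x + 1) + 1) * c (1 + (x + 1))
        = -(elimOne w 2 / B) * (ρ ^ x * w (m + 1 - x)) := fun x hx => by
      have := mem_range.mp hx
      rw [show 1 + (x + 1) = x + 2 by ring, hc x this,
        show m + 1 - (x + 1) + 1 = m + 1 - x by omega]
      ring
    rw [sum_range_succ', sum_congr rfl this, ← mul_sum]
    simp only [tsub_zero, add_zero]
    ring
  have diff : ∑ k ∈ range m, ρ ^ k * w (m + 1 - k + (m + 2)) - ∑ k ∈ range m, ρ ^ k * w (m + 1 - k)
      = ∑ i ∈ range m, ρ ^ i * periodDiff w (m + 2) (m + 1 - i) := by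
    rw [← sum_sub_distrib]
    refine sum_congr rfl fun k _ => ?_
    rw [periodDiff, add_comm (m + 1 - k)]
    ring
  have hd1 : periodDiff w (m + 2) (m + 1 - m) = -B := by
    rw [periodDiff, show m + 1 - m = 1 by omega, hB]
    ring
  rw [tail, hzn]
  rw [hd1] at hsucc
  linear_combination slide - c 0 * hB + elimOne w 2 / B * diff + hsucc + ρ ^ m * hκ

theorem sum_conv_eq_ite (hw : HoradamRec p q w) (hw1 : w 1 ≠ 0) (hB : B = w 1 - w (n + 1))
    (hA : ρ * B = q * (w n - w 0)) (hBne : B ≠ 0)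
    (hc0 : c 0 = 1 + B⁻¹ * ∑ k ∈ range (n - 2), elimOne w (n - k) * ρ ^ k)
    (hc1 : c 1 = -w 2 / w 1 + q * (B⁻¹ * ∑ k ∈ range (n - 2), elimOne w (n - 1 - k) * ρ ^ k))
    (hc : ∀ k < n - 2, c (k + 2) = -(elimOne w 2 / B) * ρ ^ k) (hn : 2 ≤ n)
    (hzn : zn = B * c 0 + elimOne w 2 * ρ ^ (n - 2)) (k : Fin n) :
    ∑ j : Fin n, w ((k - j : Fin n) + 1) * c j = if (k : ℕ) = 0 then zn else 0 := by
  rw [Fin.sum_sub_eq_sum_range_add_sum_range (fun i j => w (i + 1) * c j)]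
  obtain ⟨_ | s, hk⟩ := k
  · simpa using sum_conv_zero_eq hw hw1 hB hA hBne hc0 hc1 hc hn hzn
  · exact sum_conv_succ_eq_zero hw hw1 hB hA hBne hc0 hc1 hc hk

theorem sum_Icc_coeff_zero :
    ∑ i ∈ Icc 1 (n - 2), (w (n + 2 - i) - w 2 / w 1 * w (n + 1 - i)) * A ^ (i - 1) / B ^ i =
      B⁻¹ * ∑ k ∈ range (n - 2), elimOne w (n - k) * (A / B) ^ k := by
  rw [sum_Icc_one_eq_sum_range, mul_sum]
  refine sum_congr rfl fun k hk => ?_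
  have := mem_range.mp hk
  rw [show n + 2 - (k + 1) = n - k + 1 by omega, show n + 1 - (k + 1) = n - k by omega, elimOne,
    add_tsub_cancel_right]
  ring

theorem sum_Icc_coeff_one :
    ∑ i ∈ Icc 1 (n - 2), (w (n + 1 - i) - w 2 * w (n - i) / w 1) * A ^ (i - 1) / B ^ i =
      B⁻¹ * ∑ k ∈ range (n - 2), elimOne w (n - 1 - k) * (A / B) ^ k := by
  rw [sum_Icc_one_eq_sum_range, mul_sum]
  refine sum_congr rfl fun k hk => ?_
  have := mem_range.mp hk
  rw [show n + 1 - (k + 1) = n - 1 - k + 1 by omega, show n - (k + 1) = n - 1 - k by omega, elimOne,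
    add_tsub_cancel_right]
  ring

theorem coeff_add_two_eq
    (hcj : ∀ j : ℕ, 2 ≤ j → j ≤ n - 1 → c j = -((w 3 - w 2 ^ 2 / w 1) * A ^ (j - 2) / B ^ (j - 1)))
    (k : ℕ) (hk : k < n - 2) : c (k + 2) = -(elimOne w 2 / B) * (A / B) ^ k := by
  rw [hcj (k + 2) (by omega) (by omega), add_tsub_cancel_right, show k + 2 - 1 = k + 1 by omega,
    elimOne]
  ring

theorem eq_mul_coeff_zero_add (hn : 2 ≤ n) (hB : B = w 1 - w (n + 1)) (hBne : B ≠ 0)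
    (hc0 : c 0 = 1 + B⁻¹ * ∑ k ∈ range (n - 2), elimOne w (n - k) * ρ ^ k)
    (hzn : zn = -(w 2 * w n) / w 1 + w 1 +
        ∑ i ∈ Icc 1 (n - 2), (-(w 2 * w (i + 1)) / w 1 + w (i + 2)) * ρ ^ (n - (i + 1))) :
    zn = B * c 0 + elimOne w 2 * ρ ^ (n - 2) := by
  obtain ⟨m, rfl⟩ : ∃ m, n = m + 2 := ⟨n - 2, by omega⟩
  simp only [add_tsub_cancel_right] at hc0 hzn ⊢
  have reflect : ∑ i ∈ Icc 1 m, (-(w 2 * w (i + 1)) / w 1 + w (i + 2)) * ρ ^ (m + 2 - (i + 1)) =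
      ∑ k ∈ range m, elimOne w (m + 1 - k) * ρ ^ (k + 1) := by
    rw [sum_Icc_one_eq_sum_range, ← sum_range_reflect]
    refine sum_congr rfl fun k hk => ?_
    have := mem_range.mp hk
    rw [elimOne, show m - 1 - k + 1 + 1 = m + 1 - k by omega,
      show m - 1 - k + 1 + 2 = m + 1 - k + 1 by omega,
      show m + 2 - (m + 1 - k) = k + 1 by omega]
    ring
  have shift : ∑ k ∈ range m, elimOne w (m + 2 - k) * ρ ^ k + elimOne w 2 * ρ ^ m =
      elimOne w (m + 2) + ∑ k ∈ range m, elimOne w (m + 1 - k) * ρ ^ (k + 1) := by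
    have := sum_range_succ' (fun k => elimOne w (m + 2 - k) * ρ ^ k) m
    rw [sum_range_succ, add_tsub_cancel_left] at this
    simpa [show ∀ k, m + 2 - (k + 1) = m + 1 - k by omega, add_comm] using this
  have he : elimOne w (m + 2) = w (m + 2 + 1) - w 2 / w 1 * w (m + 2) := rfl
  rw [hzn, reflect, hc0, mul_add, mul_one, ← mul_assoc, mul_inv_cancel₀ hBne, one_mul]
  linear_combination -shift - hB - he

end Horadam

theorem inv_gCirc_horadamClassic_general
    (p q : ℝ)
    (w : ℕ → ℝ) (hrec : ∀ m : ℕ, w (m + 2) = p * w (m + 1) + q * w m)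
    (n r : ℕ) (hn : 2 < n) (hgcd : Nat.gcd n r = 1)
    (A B zn : ℝ) (hA : A = q * (w n - w 0)) (hB : B = w 1 - w (n + 1))
    (hzn : zn = -(w 2 * w n) / w 1 + w 1 +
        ∑ i ∈ Finset.Icc 1 (n - 2),
          (-(w 2 * w (i + 1)) / w 1 + w (i + 2)) * (A / B) ^ (n - (i + 1)))
    (hw1 : w 1 ≠ 0) (hBne : B ≠ 0) (hznne : zn ≠ 0)
    (c : ℕ → ℝ)
    (hc0 : c 0 = 1 + ∑ i ∈ Finset.Icc 1 (n - 2),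
        (w (n + 2 - i) - w 2 / w 1 * w (n + 1 - i)) * A ^ (i - 1) / B ^ i)
    (hc1 : c 1 = -(w 2) / w 1 + q * ∑ i ∈ Finset.Icc 1 (n - 2),
        (w (n + 1 - i) - w 2 * w (n - i) / w 1) * A ^ (i - 1) / B ^ i)
    (hcj : ∀ j : ℕ, 2 ≤ j → j ≤ n - 1 →
        c j = -((w 3 - w 2 ^ 2 / w 1) * A ^ (j - 2) / B ^ (j - 1))) :
    (gCirc n r (fun m => w (m + 1)))⁻¹ = (1 / zn) • (circ n c * (Qg n r)ᵀ) := by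
  rw [sum_Icc_coeff_zero] at hc0
  rw [sum_Icc_coeff_one] at hc1
  have hρ : A / B * B = q * (w n - w 0) := by rw [div_mul_cancel₀ A hBne, hA]
  have hprod : circ n (fun m => w (m + 1)) * circ n c = zn • 1 :=
    circ_mul_circ_eq_smul_one <| sum_conv_eq_ite hrec hw1 hB hρ hBne hc0 hc1 (coeff_add_two_eq hcj)
      hn.le (eq_mul_coeff_zero_add hn.le hB hBne hc0 hzn)
  refine inv_eq_right_inv ?_
  rw [gCirc_eq_Qg_mul_circ, Matrix.mul_smul, ← Matrix.mul_assoc, Matrix.mul_assoc (Qg n r), hprod,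
    Matrix.mul_smul, Matrix.mul_one, Matrix.smul_mul, Qg_mul_transpose hgcd, smul_smul,
    one_div_mul_cancel hznne, one_smul]

/-- The inverse of the g-circulant matrix of Horadam numbers. -/
theorem inv_gCirc_horadamClassic
    (p q : ℝ) (hpq : p ^ 2 + 4 * q > 0)
    (w : ℕ → ℝ) (hrec : ∀ m : ℕ, w (m + 2) = p * w (m + 1) + q * w m)
    (n r : ℕ) (hn : 2 < n) (hgcd : Nat.gcd n r = 1)
    (A B zn : ℝ) (hA : A = q * (w n - w 0)) (hB : B = w 1 - w (n + 1))
    (hzn : zn = -(w 2 * w n) / w 1 + w 1 +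
        ∑ i ∈ Finset.Icc 1 (n - 2),
          (-(w 2 * w (i + 1)) / w 1 + w (i + 2)) * (A / B) ^ (n - (i + 1)))
    (hw1 : w 1 ≠ 0) (hBne : B ≠ 0) (hznne : zn ≠ 0)
    (c : ℕ → ℝ)
    (hc0 : c 0 = 1 + ∑ i ∈ Finset.Icc 1 (n - 2),
        (w (n + 2 - i) - w 2 / w 1 * w (n + 1 - i)) * A ^ (i - 1) / B ^ i)
    (hc1 : c 1 = -(w 2) / w 1 + q * ∑ i ∈ Finset.Icc 1 (n - 2),
        (w (n + 1 - i) - w 2 * w (n - i) / w 1) * A ^ (i - 1) / B ^ i)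
    (hcj : ∀ j : ℕ, 2 ≤ j → j ≤ n - 1 →
        c j = -((w 3 - w 2 ^ 2 / w 1) * A ^ (j - 2) / B ^ (j - 1))) :
    (gCirc n r (fun m => w (m + 1)))⁻¹ = (1 / zn) • (circ n c * (Qg n r)ᵀ) :=
  inv_gCirc_horadamClassic_general p q w hrec n r hn hgcd A B zn hA hB hzn hw1 hBne hznne c hc0 hc1
    hcj
end
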